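/- arXiv:0909.1134 — 2 statements merged into one kernel-verified Lean document; each statement's English description precedes it below -/
import Mathlib

section
/- For every facet τ of Λ_d and every vertex v ∈ up(τ) ∪ tail(τ), there exists a facet τ' of Λ_d with τ' ≻ τ in revlex order and τ − {v} ⊆ τ'. Explicitly, if v ∈ tail(τ) one may take τ' = (τ − v) ∪ Gap(τ), and if v ∈ up(τ) ∩ V_i one may take τ' = (τ − v) ∪ fgap(τ,i). -/
/-! Both exchanges replace `v` by a vertex `g ∉ τ` with `v < g` whose colour class still has room
once `v` has left (`g` is in the class of `v`, or in a class that is not full). The result is again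
a facet, and `v` is the least element on which it differs from `τ`, so it comes first in revlex. -/

open Finset

variable {V : Type*} [Fintype V] [LinearOrder V]

/-- Facets of `Λ_d`: `d`-subsets meeting the `i`-th color class in at most `a i` vertices.
The order `≻` of the paper is `>` here. -/
def IsFacet (c : V → ℕ) (a : ℕ → ℕ) (m d : ℕ) (τ : Finset V) : Prop :=
  τ.card = d ∧ ∀ i ∈ Finset.range m, (τ.filter (fun v => c v = i)).card ≤ a i

/-- Revlex order on equal-size subsets. -/
def RevGT (S T : Finset V) : Prop :=
  ∃ v ∈ T, v ∉ S ∧ ∀ w, w < v → (w ∈ S ↔ w ∈ T)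

/-- `up(τ)`. -/
def upF (c : V → ℕ) (a : ℕ → ℕ) (τ : Finset V) : Finset V :=
  τ.filter (fun v => (τ.filter (fun w => c w = c v)).card = a (c v) ∧
    ∃ g, c g = c v ∧ g ∉ τ ∧ v < g)

/-- `tail(τ)`. -/
def tailF (c : V → ℕ) (a : ℕ → ℕ) (τ : Finset V) : Finset V :=
  τ.filter (fun v => ∃ g, g ∉ τ ∧ (τ.filter (fun w => c w = c g)).card < a (c g) ∧ v < g)

/-- Candidates for `Gap(τ)`: vertices in neither `τ` nor a full color class; `Gap(τ)` is the
`≻`-largest of these, i.e. the maximum. -/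
def gapSet (c : V → ℕ) (a : ℕ → ℕ) (τ : Finset V) : Finset V :=
  Finset.univ.filter (fun w => w ∉ τ ∧ (τ.filter (fun u => c u = c w)).card < a (c w))

section Swap

variable {c : V → ℕ} {a : ℕ → ℕ} {m d : ℕ} {τ : Finset V} {v g : V}

omit [Fintype V] in
lemma IsFacet.insert_erase (hτ : IsFacet c a m d τ) (hv : v ∈ τ) (hg : g ∉ τ)
    (hroom : c g = c v ∨ (τ.filter (fun w => c w = c g)).card < a (c g)) :
    IsFacet c a m d (insert g (τ.erase v)) := by
  obtain ⟨hcard, hclass⟩ := hτ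
  have hgv : g ∉ τ.erase v := fun h => hg (mem_of_mem_erase h)
  refine ⟨?_, fun i hi => ?_⟩
  · have : 0 < τ.card := card_pos.2 ⟨v, hv⟩
    rw [card_insert_of_notMem hgv, card_erase_of_mem hv]
    omega
  have hτi := hclass i hi
  rw [filter_insert, filter_erase]
  by_cases hgi : c g = i
  · rw [if_pos hgi, card_insert_of_notMem (by simp [hg])]
    by_cases hvi : c v = i
    · have hvτi : v ∈ τ.filter (fun w => c w = i) := mem_filter.2 ⟨hv, hvi⟩
      have : 0 < (τ.filter (fun w => c w = i)).card := card_pos.2 ⟨v, hvτi⟩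
      rw [card_erase_of_mem hvτi]
      omega
    · have hfull : (τ.filter (fun w => c w = i)).card < a i := by
        rcases hroom with h | h
        · exact absurd (h ▸ hgi) hvi
        · rwa [hgi] at h
      rw [erase_eq_of_notMem (by simp [hvi])]
      omega
  · rw [if_neg hgi]
    exact card_erase_le.trans hτi

omit [Fintype V] in
lemma revGT_insert_erase (hv : v ∈ τ) (hvg : v < g) :
    RevGT (insert g (τ.erase v)) τ := by
  refine ⟨v, hv, by simp [hvg.ne], fun w hw => ?_⟩
  simp [(hw.trans hvg).ne, hw.ne]

omit [Fintype V] in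
lemma swap_isFacet_revGT (hτ : IsFacet c a m d τ) (hv : v ∈ τ) (hg : g ∉ τ) (hvg : v < g)
    (hroom : c g = c v ∨ (τ.filter (fun w => c w = c g)).card < a (c g)) :
    IsFacet c a m d (insert g (τ.erase v)) ∧ RevGT (insert g (τ.erase v)) τ ∧
      τ.erase v ⊆ insert g (τ.erase v) :=
  ⟨hτ.insert_erase hv hg hroom, revGT_insert_erase hv hvg, subset_insert _ _⟩

end Swap

section Witnesses

variable {c : V → ℕ} {a : ℕ → ℕ} {τ : Finset V} {v g : V}

lemma gapSet_nonempty_of_mem_tailF (hv : v ∈ tailF c a τ) : (gapSet c a τ).Nonempty := by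
  obtain ⟨-, g, hg, hroom, -⟩ := mem_filter.1 hv
  exact ⟨g, mem_filter.2 ⟨mem_univ _, hg, hroom⟩⟩

lemma lt_of_mem_tailF_of_max_gapSet (hv : v ∈ tailF c a τ) (hmax : (gapSet c a τ).max = some g) :
    v < g := by
  obtain ⟨-, g', hg', hroom, hvg'⟩ := mem_filter.1 hv
  exact hvg'.trans_le (le_max_of_eq (mem_filter.2 ⟨mem_univ _, hg', hroom⟩) hmax)

lemma classCompl_nonempty_of_mem_upF (hv : v ∈ upF c a τ) :
    ((univ.filter (fun w : V => c w = c v)) \ τ).Nonempty := by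
  obtain ⟨-, -, g, hgc, hg, -⟩ := mem_filter.1 hv
  exact ⟨g, mem_sdiff.2 ⟨mem_filter.2 ⟨mem_univ _, hgc⟩, hg⟩⟩

lemma lt_of_mem_upF_of_max_classCompl (hv : v ∈ upF c a τ)
    (hmax : ((univ.filter (fun w : V => c w = c v)) \ τ).max = some g) : v < g := by
  obtain ⟨-, -, g', hgc', hg', hvg'⟩ := mem_filter.1 hv
  exact hvg'.trans_le (le_max_of_eq (mem_sdiff.2 ⟨mem_filter.2 ⟨mem_univ _, hgc'⟩, hg'⟩) hmax)

end Witnesses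

open Classical in
theorem stmt2_general (c : V → ℕ) (a : ℕ → ℕ) (m d : ℕ) :
    ∀ τ : Finset V, IsFacet c a m d τ →
      (∀ v ∈ upF c a τ ∪ tailF c a τ,
        ∃ τ', IsFacet c a m d τ' ∧ RevGT τ' τ ∧ τ.erase v ⊆ τ') ∧
      (∀ v ∈ tailF c a τ, ∀ g, (gapSet c a τ).max = some g →
        IsFacet c a m d (insert g (τ.erase v)) ∧ RevGT (insert g (τ.erase v)) τ ∧
          τ.erase v ⊆ insert g (τ.erase v)) ∧
      (∀ v ∈ upF c a τ, ∀ g, ((Finset.univ.filter (fun w : V => c w = c v)) \ τ).max = some g →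
        IsFacet c a m d (insert g (τ.erase v)) ∧ RevGT (insert g (τ.erase v)) τ ∧
          τ.erase v ⊆ insert g (τ.erase v)) := by
  intro τ hτ
  have hgap : ∀ v ∈ tailF c a τ, ∀ g, (gapSet c a τ).max = some g →
      IsFacet c a m d (insert g (τ.erase v)) ∧ RevGT (insert g (τ.erase v)) τ ∧
        τ.erase v ⊆ insert g (τ.erase v) := fun v hv g hmax => by
    obtain ⟨-, hg, hroom⟩ := mem_filter.1 (mem_of_max hmax)
    exact swap_isFacet_revGT hτ (mem_filter.1 hv).1 hg
      (lt_of_mem_tailF_of_max_gapSet hv hmax) (Or.inr hroom)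
  have hfgap : ∀ v ∈ upF c a τ, ∀ g,
      ((Finset.univ.filter (fun w : V => c w = c v)) \ τ).max = some g →
      IsFacet c a m d (insert g (τ.erase v)) ∧ RevGT (insert g (τ.erase v)) τ ∧
        τ.erase v ⊆ insert g (τ.erase v) := fun v hv g hmax => by
    obtain ⟨hgc, hg⟩ := mem_sdiff.1 (mem_of_max hmax)
    exact swap_isFacet_revGT hτ (mem_filter.1 hv).1 hg
      (lt_of_mem_upF_of_max_classCompl hv hmax) (Or.inl (mem_filter.1 hgc).2)
  refine ⟨fun v hv => ?_, hgap, hfgap⟩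
  rcases mem_union.1 hv with hup | htail
  · obtain ⟨g, hmax⟩ := max_of_nonempty (classCompl_nonempty_of_mem_upF hup)
    exact ⟨_, hfgap v hup g hmax⟩
  · obtain ⟨g, hmax⟩ := max_of_nonempty (gapSet_nonempty_of_mem_tailF htail)
    exact ⟨_, hgap v htail g hmax⟩

open Classical in
/-- For every facet `τ` of `Λ_d` and every `v ∈ up(τ) ∪ tail(τ)` there is a revlex-earlier
facet `τ' ≻ τ` with `τ - v ⊆ τ'`; explicitly one may take `τ' = (τ - v) ∪ Gap(τ)` when
`v ∈ tail(τ)`, and `τ' = (τ - v) ∪ fgap(τ, c v)` when `v ∈ up(τ)`. -/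
theorem stmt2 (c : V → ℕ) (a : ℕ → ℕ) (m d : ℕ)
    (horder : ∀ v w : V, c v < c w → w < v)
    (hc : ∀ v : V, c v < m)
    (ha : ∀ i, i < m → 0 < a i ∧ a i ≤ (Finset.univ.filter (fun v : V => c v = i)).card)
    (hd1 : 1 ≤ d) (hd2 : d ≤ ∑ i ∈ Finset.range m, a i) :
    ∀ τ : Finset V, IsFacet c a m d τ →
      (∀ v ∈ upF c a τ ∪ tailF c a τ,
        ∃ τ', IsFacet c a m d τ' ∧ RevGT τ' τ ∧ τ.erase v ⊆ τ') ∧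
      (∀ v ∈ tailF c a τ, ∀ g, (gapSet c a τ).max = some g →
        IsFacet c a m d (insert g (τ.erase v)) ∧ RevGT (insert g (τ.erase v)) τ ∧
          τ.erase v ⊆ insert g (τ.erase v)) ∧
      (∀ v ∈ upF c a τ, ∀ g, ((Finset.univ.filter (fun w : V => c w = c v)) \ τ).max = some g →
        IsFacet c a m d (insert g (τ.erase v)) ∧ RevGT (insert g (τ.erase v)) τ ∧
          τ.erase v ⊆ insert g (τ.erase v)) :=
  stmt2_general c a m d
end

section
/- For every facet τ of Λ_d, deg(Φ(τ)) = |R(τ)|, where R(τ) = up(τ) ∪ tail(τ) is the restriction face of τ in the revlex shelling of Λ_d. More precisely, R(τ) = ρ(X_0, V[μ])(μ_{X_0}) ∪ (∪_{i=1}^m ρ(X_i, V_i)(μ_{X_i})) where μ = Φ(τ). -/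
open Finset

/-- The one-block map `φ` (0-based encoding of an ordered set in listing order; output is the
multiset of 1-based variable indices). -/
def phiMap (τ : Finset ℕ) : Multiset ℕ :=
  ↑(((τ.sort (· ≤ ·)).zipIdx.map (fun p => p.1 - p.2)).filter (fun x => x ≠ 0))

/-- The "non-initial-segment" part `ρ(Y,W)` of the inverse map `ψ(Y,W)`, for an ambient
ordered set `W` whose `a`-subsets are matched with monomials. -/
def rhoMap (a : ℕ) (μ : Multiset ℕ) : Finset ℕ :=
  ((μ.sort (· ≤ ·)).zipIdx.map (fun p => p.1 + p.2 + (a - Multiset.card μ))).toFinset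

/-- The one-block map `ψ(Y,W) = σ ∪ ρ`. -/
def psiMap (a : ℕ) (μ : Multiset ℕ) : Finset ℕ :=
  Finset.range (a - Multiset.card μ) ∪ rhoMap a μ

/-- `fl(τ,i)`: the revlex-first `k`-subset of `range N` containing `s` (add the earliest
missing elements). -/
def fillF (s : Finset ℕ) (k N : ℕ) : Finset ℕ :=
  s ∪ ((((Finset.range N) \ s).sort (· ≤ ·)).take (k - s.card)).toFinset

/-- A facet of `Λ_d`, encoded blockwise: `τ i ⊆ V_i = range (n i)` with `|τ i| ≤ a i`
(for `i < m`) and `∑ |τ i| = d`. -/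
def IsFacetT (m d : ℕ) (n a : ℕ → ℕ) (τ : ℕ → Finset ℕ) : Prop :=
  (∀ i, i < m → τ i ⊆ Finset.range (n i)) ∧ (∀ i, i < m → (τ i).card ≤ a i) ∧
  (∀ i, m ≤ i → τ i = ∅) ∧ (∑ i ∈ Finset.range m, (τ i).card) = d

/-- `Φ_i(τ) = φ(V_i, X_i)(fl(τ,i))`. -/
def PhiBlock (a n : ℕ → ℕ) (τ : ℕ → Finset ℕ) (i : ℕ) : Multiset ℕ :=
  phiMap (fillF (τ i) (a i) (n i))

/-- `b i = a i - deg Φ_i(τ)`, the size of the block-`i` part of `V[τ]`. -/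
def bfun (a n : ℕ → ℕ) (τ : ℕ → Finset ℕ) (i : ℕ) : ℕ :=
  a i - Multiset.card (PhiBlock a n τ i)

/-- Offsets identifying `V[τ] = ⋃ᵢ (first `b i` elements of `V_i`)` with `range (∑ b)`. -/
def offF (b : ℕ → ℕ) (i : ℕ) : ℕ := ∑ t ∈ Finset.range i, b t

/-- `τ ∩ V[τ]`, as a subset of `range (∑ b)` via the order isomorphism. -/
def globF (m : ℕ) (b : ℕ → ℕ) (τ : ℕ → Finset ℕ) : Finset ℕ :=
  (Finset.range m).biUnion (fun i => ((τ i) ∩ Finset.range (b i)).image (fun j => offF b i + j))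

/-- The full map `Φ`: index `0` gives the `X₀`-part `Φ₀(τ) = φ(V[τ],X₀)(τ ∩ V[τ])`, and index
`i+1 ≤ m` gives the `X_i`-part `Φ_i(τ)`. -/
def PhiMapT (m : ℕ) (a n : ℕ → ℕ) (τ : ℕ → Finset ℕ) : ℕ → Multiset ℕ :=
  fun i => if i = 0 then phiMap (globF m (bfun a n τ) τ)
    else if i ≤ m then PhiBlock a n τ (i - 1) else 0

/-- Membership in `S_d(X,(∞,a))`, blockwise: `μ 0` is the `X₀`-part (`|X₀| = ∑ a - d`) and
`μ (i+1)` is the `X_i`-part (`|X_i| = n i - a i`, of degree at most `a i`). -/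
def InST (m d : ℕ) (n a : ℕ → ℕ) (μ : ℕ → Multiset ℕ) : Prop :=
  (∑ i ∈ Finset.range (m + 1), Multiset.card (μ i)) ≤ d ∧
  (∀ i, i < m → Multiset.card (μ (i + 1)) ≤ a i) ∧
  (∀ x ∈ μ 0, 1 ≤ x ∧ x ≤ (∑ i ∈ Finset.range m, a i) - d) ∧
  (∀ i, i < m → ∀ x ∈ μ (i + 1), 1 ≤ x ∧ x ≤ n i - a i) ∧
  (∀ i, m + 1 ≤ i → μ i = 0)

/-- The inverse map `Ψ`: `Ψ(μ) ∩ V_i = Ψ_i(μ) ∪ (block-i part of Ψ₀(μ))` where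
`Ψ_i(μ) = ρ(X_i,V_i)(μ_{X_i})` and `Ψ₀(μ) = ψ(X₀,V[μ])(μ_{X₀}) ⊆ V[μ] ≅ range (∑ b)`. -/
def PsiMapT (m d : ℕ) (n a : ℕ → ℕ) (μ : ℕ → Multiset ℕ) : ℕ → Finset ℕ :=
  fun i =>
    if i < m then
      rhoMap (a i) (μ (i + 1)) ∪
        ((psiMap ((∑ t ∈ Finset.range m, (a t - Multiset.card (μ (t + 1)))) -
              ((∑ t ∈ Finset.range m, a t) - d)) (μ 0) ∩
            Finset.Ico (offF (fun t => a t - Multiset.card (μ (t + 1))) i)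
              (offF (fun t => a t - Multiset.card (μ (t + 1))) i +
                (a i - Multiset.card (μ (i + 1))))).image
          (fun j => j - offF (fun t => a t - Multiset.card (μ (t + 1))) i))
    else ∅

/-- The block-`i` part of `up(τ)`: if `|τ ∩ V_i| = a i`, the elements of `τ ∩ V_i` occurring
after the first gap of `V_i - τ` (smaller index = earlier = `≻`-larger). -/
def upT (a n : ℕ → ℕ) (τ : ℕ → Finset ℕ) (i : ℕ) : Finset ℕ :=
  if (τ i).card = a i then
    (τ i).filter (fun j => ∃ g ∈ Finset.range (n i) \ τ i, g < j) else ∅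

/-- The block-`i` part of `tail(τ)`: elements of `τ ∩ V_i` occurring strictly after
`Gap(τ)`, the earliest vertex lying in neither `τ` nor a full block. -/
def tailT (m : ℕ) (a n : ℕ → ℕ) (τ : ℕ → Finset ℕ) (i : ℕ) : Finset ℕ :=
  (τ i).filter (fun j => ∃ i₀, i₀ < m ∧ (τ i₀).card < a i₀ ∧
    (∀ t, t < i₀ → (τ t).card = a t) ∧
    (i₀ < i ∨ (i₀ = i ∧ ∃ g, g < j ∧ g ∉ τ i ∧ g < n i)))

/-!
Write `mex s` for the least natural number missing from `s`, i.e. the first gap of `s`. On a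
set `σ`, the map `φ` records the offsets `σ_k - k`, which vanish exactly on the initial
segment `range (mex σ)`; so `φ` forgets that segment, and `ρ` rebuilds precisely
`σ \ range (mex σ)`. Hence `ρ(Φ_i(τ))` is the part of `τ ∩ V_i` beyond the first gap of
`fl(τ,i)` (whose length is `b i`), and `ρ(Φ₀(τ))` is the part of `τ ∩ V[τ]` beyond its first
gap. Filling a non-full block strictly moves its first gap, while a full block is its own
filling, so the first gap of `τ ∩ V[τ]` is the first gap of the first non-full block. Both
sides of the blockwise identity are therefore the elements of `τ ∩ V_i` that lie beyond the
first gap of `τ ∩ V_i` or in a block preceded by a non-full one. The degree count follows,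
since `ρ` preserves cardinality and the slices of `ρ(Φ₀(τ))` partition it.
-/

noncomputable def mex (s : Finset ℕ) : ℕ := sInf (↑s : Set ℕ)ᶜ

section mex

variable {s t : Finset ℕ} {j k : ℕ}

lemma mex_notMem (s : Finset ℕ) : mex s ∉ s :=
  Nat.sInf_mem (s := (↑s : Set ℕ)ᶜ) s.finite_toSet.infinite_compl.nonempty

lemma mex_le_of_notMem (h : j ∉ s) : mex s ≤ j := Nat.sInf_le h

lemma le_mex_iff : k ≤ mex s ↔ range k ⊆ s := by
  refine ⟨fun hk x hx => ?_, fun hk => ?_⟩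
  · by_contra hxs
    have := mex_le_of_notMem hxs
    simp only [mem_range] at hx
    omega
  · by_contra! hlt
    exact mex_notMem s (hk (mem_range.mpr hlt))

lemma mem_of_lt_mex (h : j < mex s) : j ∈ s :=
  le_mex_iff.mp h (self_mem_range_succ j)

lemma range_mex_subset (s : Finset ℕ) : range (mex s) ⊆ s := le_mex_iff.mp le_rfl

lemma mex_le_card (s : Finset ℕ) : mex s ≤ s.card := by
  simpa using card_le_card (range_mex_subset s)

lemma mex_mono (h : s ⊆ t) : mex s ≤ mex t :=
  le_mex_iff.mpr ((range_mex_subset s).trans h)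

lemma exists_lt_notMem_iff_mex_lt : (∃ g < j, g ∉ s) ↔ mex s < j := by
  refine ⟨fun ⟨g, hgj, hgs⟩ => ?_, fun h => ⟨mex s, h, mex_notMem s⟩⟩
  have := mex_le_of_notMem hgs
  omega

end mex

lemma List.SortedLT.getElem_add_le {l : List ℕ} (hl : l.SortedLT) {i k : ℕ}
    (h : i + k < l.length) : l[i] + k ≤ l[i + k] := by
  induction k with
  | zero => simp
  | succ k ih =>
    have hstep : l[i + k] < l[i + (k + 1)] :=
      (hl.getElem_lt_getElem_iff (hi := by omega) (hj := h)).mpr (by omega)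
    have := ih (by omega)
    omega

lemma List.SortedLT.mem_take_of_lt {α : Type*} [LinearOrder α] {l : List α} (hl : l.SortedLT)
    {k : ℕ} {x y : α} (hx : x ∈ l.take k) (hy : y ∈ l) (hyx : y < x) : y ∈ l.take k := by
  obtain ⟨i, hi, rfl⟩ := List.mem_take_iff_getElem.mp hx
  obtain ⟨j, _, rfl⟩ := List.getElem_of_mem hy
  have hji : j < i := hl.getElem_lt_getElem_iff.mp hyx
  exact List.mem_take_iff_getElem.mpr ⟨j, by omega, rfl⟩

lemma sort_eq_range_append (σ : Finset ℕ) :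
    σ.sort (· ≤ ·) = List.range (mex σ) ++ (σ \ range (mex σ)).sort (· ≤ ·) := by
  apply List.Perm.eq_of_pairwise' (Finset.pairwise_sort σ _)
  · rw [List.pairwise_append]
    refine ⟨List.pairwise_le_range, Finset.pairwise_sort _ _, ?_⟩
    intro x hx y hy
    simp only [List.mem_range, Finset.mem_sort, Finset.mem_sdiff, mem_range] at hx hy
    omega
  · rw [List.perm_ext_iff_of_nodup (Finset.sort_nodup _ _)]
    · intro x
      simp only [Finset.mem_sort, List.mem_append, List.mem_range, Finset.mem_sdiff, mem_range]
      constructor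
      · intro hx
        by_cases h : x < mex σ <;> simp [h, hx]
      · rintro (h | ⟨h, -⟩)
        · exact mem_of_lt_mex h
        · exact h
    · rw [List.nodup_append]
      refine ⟨List.nodup_range, Finset.sort_nodup _ _, ?_⟩
      intro x hx y hy
      simp only [List.mem_range, Finset.mem_sort, Finset.mem_sdiff, mem_range] at hx hy
      omega

lemma add_lt_getElem_sort {u : Finset ℕ} {p k : ℕ} (hu : ∀ x ∈ u, p < x)
    (hk : k < (u.sort (· ≤ ·)).length) : p + k < (u.sort (· ≤ ·))[k] := by
  have h0 : p < (u.sort (· ≤ ·))[0] := hu _ ((Finset.mem_sort _).mp (List.getElem_mem _))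
  have := (Finset.sortedLT_sort u).getElem_add_le (i := 0) (k := k) (by omega)
  simp only [Nat.zero_add] at this
  omega

lemma mex_lt_of_mem_sdiff {σ : Finset ℕ} {x : ℕ} (hx : x ∈ σ \ range (mex σ)) : mex σ < x := by
  rw [Finset.mem_sdiff, mem_range, not_lt] at hx
  exact lt_of_le_of_ne hx.2 fun h => mex_notMem σ (h ▸ hx.1)

lemma phiMap_eq (σ : Finset ℕ) :
    phiMap σ = ↑((((σ \ range (mex σ)).sort (· ≤ ·)).zipIdx (mex σ)).map
      (fun p => p.1 - p.2)) := by
  unfold phiMap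
  rw [sort_eq_range_append, List.zipIdx_append, List.map_append, List.filter_append,
    List.length_range, Nat.zero_add]
  congr 1
  rw [List.filter_eq_nil_iff.mpr, List.nil_append, List.filter_eq_self]
  · simp only [List.mem_map, ne_eq, decide_eq_true_eq, forall_exists_index, and_imp]
    rintro _ ⟨x, i⟩ hxi rfl
    obtain ⟨h1, h2, hx⟩ := List.mem_zipIdx hxi
    rw [hx]
    have := add_lt_getElem_sort (u := σ \ range (mex σ)) (fun _ => mex_lt_of_mem_sdiff)
      (k := i - mex σ) (by omega)
    omega
  · simp only [List.mem_map, ne_eq, decide_eq_true_eq, not_not, forall_exists_index, and_imp]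
    rintro _ ⟨x, i⟩ hxi rfl
    obtain ⟨-, -, hx⟩ := List.mem_zipIdx hxi
    simp [hx]

lemma card_phiMap (σ : Finset ℕ) : Multiset.card (phiMap σ) = σ.card - mex σ := by
  rw [phiMap_eq, Multiset.coe_card, List.length_map, List.length_zipIdx, Finset.length_sort,
    Finset.card_sdiff_of_subset (range_mex_subset σ), card_range]

lemma rhoMap_card_phiMap (σ : Finset ℕ) : rhoMap σ.card (phiMap σ) = σ \ range (mex σ) := by
  set B := (σ \ range (mex σ)).sort (· ≤ ·) with hB
  have hBlt : ∀ k (hk : k < B.length), mex σ + k < B[k] :=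
    fun _ => add_lt_getElem_sort (fun _ => mex_lt_of_mem_sdiff)
  have hsorted : ((B.zipIdx (mex σ)).map (fun p => p.1 - p.2)).Pairwise (· ≤ ·) := by
    rw [List.pairwise_iff_getElem]
    intro i j hi hj hij
    simp only [List.length_map, List.length_zipIdx] at hi hj
    simp only [List.getElem_map, List.getElem_zipIdx]
    have := (Finset.sortedLT_sort _).getElem_add_le (l := B) (i := i) (k := j - i) (by omega)
    have := hBlt i hi
    simp only [Nat.add_sub_cancel' hij.le] at *
    omega
  have hsort : Multiset.sort (↑((B.zipIdx (mex σ)).map (fun p => p.1 - p.2)) : Multiset ℕ)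
      (· ≤ ·) = (B.zipIdx (mex σ)).map (fun p => p.1 - p.2) :=
    List.Perm.eq_of_pairwise' (Multiset.pairwise_sort _ _) hsorted
      (Multiset.coe_eq_coe.mp (Multiset.sort_eq _ _))
  have hcard := card_phiMap σ
  unfold rhoMap
  rw [hcard, phiMap_eq, hsort, Nat.sub_sub_self (mex_le_card σ),
    ← Finset.sort_toFinset (s := σ \ range (mex σ)) (r := (· ≤ ·)), ← hB]
  congr 1
  apply List.ext_getElem (by simp)
  intro i h1 h2
  simp only [List.getElem_map, List.getElem_zipIdx]
  have := hBlt i h2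
  omega

section fill

variable {s : Finset ℕ} {k N : ℕ}

lemma card_fillF (hs : s ⊆ range N) (hk : s.card ≤ k) (hkN : k ≤ N) :
    (fillF s k N).card = k := by
  have hdisj : Disjoint s ((((range N) \ s).sort (· ≤ ·)).take (k - s.card)).toFinset := by
    rw [Finset.disjoint_right]
    intro x hx
    rw [List.mem_toFinset] at hx
    exact (Finset.mem_sdiff.mp ((Finset.mem_sort _).mp (List.mem_of_mem_take hx))).2
  have hnd : ((((range N) \ s).sort (· ≤ ·)).take (k - s.card)).Nodup :=
    (Finset.sort_nodup _ _).sublist (List.take_sublist _ _)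
  rw [fillF, Finset.card_union_of_disjoint hdisj, List.toFinset_card_of_nodup hnd,
    List.length_take, Finset.length_sort, Finset.card_sdiff_of_subset hs, Finset.card_range]
  omega

lemma fillF_of_card_eq (h : s.card = k) : fillF s k N = s := by
  simp [fillF, h]

lemma fillF_sdiff_range_mex :
    fillF s k N \ range (mex (fillF s k N)) = s \ range (mex (fillF s k N)) := by
  set F := fillF s k N
  ext x
  simp only [Finset.mem_sdiff, mem_range, not_lt]
  refine ⟨fun ⟨hxF, hx⟩ => ⟨?_, hx⟩, fun ⟨hxs, hx⟩ => ⟨Finset.mem_union_left _ hxs, hx⟩⟩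
  by_contra hxs
  have hxL : x ∈ (((range N) \ s).sort (· ≤ ·)).take (k - s.card) := by
    simpa [F, fillF, hxs] using hxF
  have hxN : x ∈ range N \ s := (Finset.mem_sort _).mp (List.mem_of_mem_take hxL)
  have hmex : mex F ∈ range N \ s := by
    simp only [Finset.mem_sdiff, mem_range] at hxN ⊢
    exact ⟨by omega, fun h => mex_notMem F (Finset.mem_union_left _ h)⟩
  have hlt : mex F < x := lt_of_le_of_ne hx fun h => mex_notMem F (h ▸ hxF)
  exact mex_notMem F (Finset.mem_union_right _ (List.mem_toFinset.mpr
    ((Finset.sortedLT_sort _).mem_take_of_lt hxL ((Finset.mem_sort _).mpr hmex) hlt)))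

lemma mex_lt_mex_fillF (hlt : s.card < k) (hkN : k ≤ N) : mex s < mex (fillF s k N) := by
  set L := ((range N) \ s).sort (· ≤ ·)
  have hmexN : mex s ∈ range N \ s := by
    have := mex_le_card s
    simpa [mex_notMem] using (by omega : mex s < N)
  have hL : 0 < L.length := List.length_pos_of_mem ((Finset.mem_sort _).mpr hmexN)
  have hL0 : L[0] ∈ L.take (k - s.card) :=
    List.mem_take_iff_getElem.mpr ⟨0, by omega, rfl⟩
  have hmex_le : mex s ≤ L[0] :=
    mex_le_of_notMem (Finset.mem_sdiff.mp ((Finset.mem_sort _).mp (List.getElem_mem _))).2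
  have hmexL : mex s ∈ L.take (k - s.card) := by
    rcases hmex_le.lt_or_eq with h | h
    · exact (Finset.sortedLT_sort _).mem_take_of_lt hL0 ((Finset.mem_sort _).mpr hmexN) h
    · exact h ▸ hL0
  refine le_mex_iff.mpr fun y hy => ?_
  rcases Nat.lt_succ_iff_lt_or_eq.mp (mem_range.mp hy) with h | h
  · exact Finset.mem_union_left _ (mem_of_lt_mex h)
  · exact h ▸ Finset.mem_union_right _ (List.mem_toFinset.mpr hmexL)

end fill

section block

variable {a n : ℕ → ℕ} {τ : ℕ → Finset ℕ} {i : ℕ}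
  (hs : τ i ⊆ range (n i)) (hk : (τ i).card ≤ a i) (hkN : a i ≤ n i)
include hs hk hkN

lemma bfun_eq_mex_fillF : bfun a n τ i = mex (fillF (τ i) (a i) (n i)) := by
  have := mex_le_card (fillF (τ i) (a i) (n i))
  rw [card_fillF hs hk hkN] at this
  rw [bfun, PhiBlock, card_phiMap, card_fillF hs hk hkN]
  omega

lemma rhoMap_phiBlock : rhoMap (a i) (PhiBlock a n τ i) = τ i \ range (bfun a n τ i) := by
  have h := rhoMap_card_phiMap (fillF (τ i) (a i) (n i))
  rw [card_fillF hs hk hkN] at h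
  rw [PhiBlock, h, fillF_sdiff_range_mex, bfun_eq_mex_fillF hs hk hkN]

lemma card_sdiff_range_bfun : (τ i \ range (bfun a n τ i)).card = a i - bfun a n τ i := by
  rw [bfun_eq_mex_fillF hs hk hkN, ← fillF_sdiff_range_mex,
    Finset.card_sdiff_of_subset (range_mex_subset _), card_fillF hs hk hkN, card_range]

lemma mex_le_bfun : mex (τ i) ≤ bfun a n τ i :=
  bfun_eq_mex_fillF hs hk hkN ▸ mex_mono Finset.subset_union_left

lemma bfun_le_mex_iff : bfun a n τ i ≤ mex (τ i) ↔ (τ i).card = a i := by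
  rw [bfun_eq_mex_fillF hs hk hkN]
  refine ⟨fun h => ?_, fun h => by rw [fillF_of_card_eq h]⟩
  by_contra hne
  exact (mex_lt_mex_fillF (lt_of_le_of_ne hk hne) hkN).not_ge h

end block

section offsets

variable (b : ℕ → ℕ) {m i j : ℕ}

lemma offF_add_le_offF (h : i < j) : offF b i + b i ≤ offF b j := by
  rw [offF, ← Finset.sum_range_succ]
  exact Finset.sum_le_sum_of_subset (Finset.range_subset_range.mpr h)

lemma exists_offF_le_lt {x : ℕ} (hx : x < offF b m) :
    ∃ i < m, offF b i ≤ x ∧ x < offF b i + b i := by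
  induction m with
  | zero => simp [offF] at hx
  | succ m ih =>
    rcases Nat.lt_or_ge x (offF b m) with h | h
    · obtain ⟨i, hi, h1, h2⟩ := ih h
      exact ⟨i, by omega, h1, h2⟩
    · exact ⟨m, by omega, h, by rwa [offF, Finset.sum_range_succ] at hx⟩

lemma offF_add_inj {i' j' : ℕ} (hj : j < b i) (hj' : j' < b i')
    (h : offF b i + j = offF b i' + j') : i = i' ∧ j = j' := by
  rcases lt_trichotomy i i' with hlt | rfl | hlt
  · have := offF_add_le_offF b hlt; omega
  · omega
  · have := offF_add_le_offF b hlt; omega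

variable {b} {τ : ℕ → Finset ℕ}

lemma mem_globF_iff (hi : i < m) (hj : j < b i) : offF b i + j ∈ globF m b τ ↔ j ∈ τ i := by
  simp only [globF, Finset.mem_biUnion, Finset.mem_image, Finset.mem_inter, mem_range]
  constructor
  · rintro ⟨i', -, j', ⟨hj'τ, hj'⟩, heq⟩
    obtain ⟨rfl, rfl⟩ := offF_add_inj b hj' hj heq
    exact hj'τ
  · exact fun hjτ => ⟨i, hi, j, ⟨hjτ, hj⟩, rfl⟩

lemma globF_subset_range : globF m b τ ⊆ range (offF b m) := by
  intro x hx
  simp only [globF, Finset.mem_biUnion, Finset.mem_image, Finset.mem_inter, mem_range] at hx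
  obtain ⟨i, hi, j, ⟨-, hj⟩, rfl⟩ := hx
  have := offF_add_le_offF b hi
  exact mem_range.mpr (by omega)

lemma card_globF : (globF m b τ).card = ∑ i ∈ range m, (τ i ∩ range (b i)).card := by
  rw [globF, Finset.card_biUnion]
  · exact Finset.sum_congr rfl fun i _ => Finset.card_image_of_injective _ (add_right_injective _)
  · intro i _ i' _ hne
    simp only [Function.onFun, Finset.disjoint_left, Finset.mem_image, Finset.mem_inter,
      mem_range]
    rintro _ ⟨j, ⟨-, hj⟩, rfl⟩ ⟨j', ⟨-, hj'⟩, heq⟩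
    exact hne (offF_add_inj b hj hj' heq.symm).1

lemma lt_mex_globF_iff (hi : i < m) (hj : j < b i) :
    offF b i + j < mex (globF m b τ) ↔ (∀ t < i, b t ≤ mex (τ t)) ∧ j < mex (τ i) := by
  simp only [Nat.lt_iff_add_one_le, le_mex_iff]
  constructor
  · intro h
    refine ⟨fun t ht k hk => ?_, fun k hk => ?_⟩
    · have := offF_add_le_offF b ht
      exact (mem_globF_iff (by omega) (mem_range.mp hk)).mp
        (h (mem_range.mpr (by simp only [mem_range] at hk; omega)))
    · simp only [mem_range] at hk
      exact (mem_globF_iff hi (by omega)).mp (h (mem_range.mpr (by omega)))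
  · rintro ⟨hfull, hτi⟩ y hy
    simp only [mem_range] at hy
    have hym : y < offF b m := by have := offF_add_le_offF b hi; omega
    obtain ⟨t, ht, h1, h2⟩ := exists_offF_le_lt b hym
    obtain ⟨k, rfl⟩ := Nat.exists_eq_add_of_le h1
    refine (mem_globF_iff ht (by omega)).mpr ?_
    rcases lt_trichotomy t i with hlt | rfl | hlt
    · exact hfull t hlt (mem_range.mpr (by omega))
    · exact hτi (mem_range.mpr (by omega))
    · have := offF_add_le_offF b hlt; omega

lemma image_sub_inter_Ico (T : Finset ℕ) (o w : ℕ) :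
    (T ∩ Ico o (o + w)).image (· - o) = (range w).filter (fun j => o + j ∈ T) := by
  ext j
  simp only [Finset.mem_image, Finset.mem_filter, Finset.mem_inter, Finset.mem_Ico, mem_range]
  constructor
  · rintro ⟨x, ⟨hxT, h1, h2⟩, rfl⟩
    exact ⟨by omega, by rwa [Nat.add_sub_cancel' h1]⟩
  · rintro ⟨hj, hjT⟩
    exact ⟨o + j, ⟨hjT, by omega, by omega⟩, by omega⟩

lemma sum_card_image_sub_inter_Ico {T : Finset ℕ} (hT : T ⊆ range (offF b m)) :
    ∑ i ∈ range m, ((T ∩ Ico (offF b i) (offF b i + b i)).image (· - offF b i)).card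
      = T.card := by
  have hT' : T = (range m).biUnion fun i => T ∩ Ico (offF b i) (offF b i + b i) := by
    ext x
    simp only [Finset.mem_biUnion, Finset.mem_inter, Finset.mem_Ico, mem_range]
    refine ⟨fun hx => ?_, fun ⟨_, _, hx, _⟩ => hx⟩
    obtain ⟨i, hi, h⟩ := exists_offF_le_lt b (mem_range.mp (hT hx))
    exact ⟨i, hi, hx, h⟩
  conv_rhs => rw [hT']
  rw [Finset.card_biUnion]
  · refine Finset.sum_congr rfl fun i _ => Finset.card_image_of_injOn fun x hx y hy hxy => ?_
    simp only [Finset.coe_inter, Set.mem_inter_iff, Finset.mem_coe, Finset.mem_Ico] at hx hy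
    omega
  · intro i _ i' _ hne
    simp only [Function.onFun, Finset.disjoint_left, Finset.mem_inter, Finset.mem_Ico]
    rintro x ⟨-, h1, h2⟩ ⟨-, h1', h2'⟩
    exact hne (offF_add_inj b (i := i) (i' := i') (j := x - offF b i) (j' := x - offF b i')
      (by omega) (by omega) (by omega)).1

end offsets

/-- `R(τ) ∩ V_i`, in closed form. -/
noncomputable def restrictionBlock (a : ℕ → ℕ) (τ : ℕ → Finset ℕ) (i : ℕ) : Finset ℕ :=
  (τ i).filter fun j => (∃ t < i, (τ t).card < a t) ∨ mex (τ i) < j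

section restriction

variable {m i : ℕ} {a n : ℕ → ℕ} {τ : ℕ → Finset ℕ}

lemma mem_upT_iff (hs : τ i ⊆ range (n i)) {j : ℕ} :
    j ∈ upT a n τ i ↔ j ∈ τ i ∧ (τ i).card = a i ∧ mex (τ i) < j := by
  unfold upT
  split_ifs with hfull
  · rw [Finset.mem_filter, ← exists_lt_notMem_iff_mex_lt]
    refine and_congr_right fun hj => ?_
    have hjn := mem_range.mp (hs hj)
    simp only [Finset.mem_sdiff, mem_range, hfull, true_and]
    exact ⟨fun ⟨g, ⟨_, hg⟩, hgj⟩ => ⟨g, hgj, hg⟩, fun ⟨g, hgj, hg⟩ => ⟨g, ⟨by omega, hg⟩, hgj⟩⟩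
  · simp [hfull]

lemma upT_union_tailT (hi : i < m) (hτa : ∀ t < m, (τ t).card ≤ a t)
    (hs : τ i ⊆ range (n i)) : upT a n τ i ∪ tailT m a n τ i = restrictionBlock a τ i := by
  ext j
  simp only [Finset.mem_union, mem_upT_iff hs, tailT, restrictionBlock, Finset.mem_filter]
  by_cases hj : j ∈ τ i
  swap
  · simp [hj]
  have hgap : (∃ g, g < j ∧ g ∉ τ i ∧ g < n i) ↔ mex (τ i) < j := by
    rw [← exists_lt_notMem_iff_mex_lt]
    have hjn := mem_range.mp (hs hj)
    exact ⟨fun ⟨g, hgj, hg, _⟩ => ⟨g, hgj, hg⟩, fun ⟨g, hgj, hg⟩ => ⟨g, hgj, hg, by omega⟩⟩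
  simp only [hj, true_and, hgap]
  by_cases hearly : ∃ t < i, (τ t).card < a t
  · classical
    have hex : ∃ t, t < i ∧ (τ t).card < a t := hearly
    refine iff_of_true (Or.inr ⟨Nat.find hex, by have := (Nat.find_spec hex).1; omega,
      (Nat.find_spec hex).2, fun t ht => ?_, Or.inl (Nat.find_spec hex).1⟩) (Or.inl hearly)
    have hti : t < i := ht.trans (Nat.find_spec hex).1
    exact le_antisymm (hτa t (by omega)) (not_lt.mp fun h => Nat.find_min hex ht ⟨hti, h⟩)
  · simp only [hearly, false_or]
    simp only [not_exists, not_and, not_lt] at hearly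
    constructor
    · rintro (⟨-, h⟩ | ⟨i₀, -, h₀, -, h | ⟨rfl, h⟩⟩)
      · exact h
      · exact absurd h₀ (not_lt.mpr (hearly i₀ h))
      · exact h
    · intro h
      by_cases hfull : (τ i).card = a i
      · exact Or.inl ⟨hfull, h⟩
      · refine Or.inr ⟨i, hi, lt_of_le_of_ne (hτa i hi) hfull, fun t ht => ?_, Or.inr ⟨rfl, h⟩⟩
        exact le_antisymm (hτa t (by omega)) (hearly t ht)

end restriction

lemma card_rhoMap (a : ℕ) (μ : Multiset ℕ) : (rhoMap a μ).card = Multiset.card μ := by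
  have hsorted : ((μ.sort (· ≤ ·)).zipIdx.map
      (fun p => p.1 + p.2 + (a - Multiset.card μ))).Pairwise (· < ·) := by
    rw [List.pairwise_iff_getElem]
    intro i j hi hj hij
    simp only [List.length_map, List.length_zipIdx] at hi hj
    simp only [List.getElem_map, List.getElem_zipIdx]
    have := List.pairwise_iff_getElem.mp (Multiset.pairwise_sort μ (· ≤ ·)) i j hi hj hij
    omega
  rw [rhoMap, List.toFinset_card_of_nodup hsorted.nodup]
  simp

lemma disjoint_sdiff_range_image_sub_inter_Ico (s T : Finset ℕ) (o w : ℕ) :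
    Disjoint (s \ range w) ((T ∩ Ico o (o + w)).image (· - o)) := by
  rw [image_sub_inter_Ico, Finset.disjoint_left]
  intro j hj hj'
  exact (Finset.mem_sdiff.mp hj).2 (Finset.mem_filter.mp hj').1

section facet

variable {m d : ℕ} {a n : ℕ → ℕ} {τ : ℕ → Finset ℕ}
  (hτn : ∀ i < m, τ i ⊆ range (n i)) (hτa : ∀ i < m, (τ i).card ≤ a i)
  (han : ∀ i < m, a i ≤ n i)
include hτn hτa han

lemma rhoMap_phiMapT_zero (hsum : ∑ i ∈ range m, (τ i).card = d) :
    rhoMap ((∑ t ∈ range m, bfun a n τ t) - ((∑ t ∈ range m, a t) - d)) (PhiMapT m a n τ 0)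
      = globF m (bfun a n τ) τ \ range (mex (globF m (bfun a n τ) τ)) := by
  have hblock : ∀ i ∈ range m,
      (τ i ∩ range (bfun a n τ i)).card + a i = (τ i).card + bfun a n τ i := by
    intro i hi
    have hi := mem_range.mp hi
    have := Finset.card_inter_add_card_sdiff (τ i) (range (bfun a n τ i))
    have := card_sdiff_range_bfun (hτn i hi) (hτa i hi) (han i hi)
    have : bfun a n τ i ≤ a i := Nat.sub_le _ _
    omega
  have hG : (globF m (bfun a n τ) τ).card + ∑ t ∈ range m, a t
      = d + ∑ t ∈ range m, bfun a n τ t := by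
    rw [card_globF, ← hsum, ← Finset.sum_add_distrib, ← Finset.sum_add_distrib]
    exact Finset.sum_congr rfl hblock
  have hGle : (globF m (bfun a n τ) τ).card ≤ ∑ t ∈ range m, bfun a n τ t := by
    simpa [offF] using card_le_card (globF_subset_range (m := m) (b := bfun a n τ) (τ := τ))
  rw [show (∑ t ∈ range m, bfun a n τ t) - ((∑ t ∈ range m, a t) - d)
    = (globF m (bfun a n τ) τ).card by omega]
  simpa [PhiMapT] using rhoMap_card_phiMap (globF m (bfun a n τ) τ)

lemma rhoMap_union_image_eq_restrictionBlock {i : ℕ} (hi : i < m) :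
    rhoMap (a i) (PhiBlock a n τ i) ∪
        ((globF m (bfun a n τ) τ \ range (mex (globF m (bfun a n τ) τ))) ∩
          Ico (offF (bfun a n τ) i) (offF (bfun a n τ) i + bfun a n τ i)).image
          (· - offF (bfun a n τ) i)
      = restrictionBlock a τ i := by
  have hfull : (∀ t < i, bfun a n τ t ≤ mex (τ t)) ↔ ¬∃ t < i, (τ t).card < a t := by
    simp only [not_exists, not_and, not_lt]
    refine forall₂_congr fun t ht => ?_
    have ht : t < m := by omega
    rw [bfun_le_mex_iff (hτn t ht) (hτa t ht) (han t ht)]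
    exact ⟨fun h => h.ge, fun h => le_antisymm (hτa t ht) h⟩
  have hmex := mex_le_bfun (hτn i hi) (hτa i hi) (han i hi)
  rw [rhoMap_phiBlock (hτn i hi) (hτa i hi) (han i hi), image_sub_inter_Ico]
  ext j
  simp only [restrictionBlock, Finset.mem_union, Finset.mem_sdiff, Finset.mem_filter, mem_range]
  by_cases hjb : j < bfun a n τ i
  · rw [mem_globF_iff hi hjb, lt_mex_globF_iff hi hjb, hfull]
    constructor
    · rintro (⟨-, h⟩ | ⟨-, hj, h⟩)
      · omega
      · refine ⟨hj, or_iff_not_imp_left.mpr fun hE => ?_⟩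
        have hne : j ≠ mex (τ i) := fun h' => mex_notMem _ (h' ▸ hj)
        have : ¬j < mex (τ i) := fun hlt => h ⟨hE, hlt⟩
        omega
    · rintro ⟨hj, h | h⟩
      · exact Or.inr ⟨hjb, hj, fun ⟨hE, _⟩ => hE h⟩
      · exact Or.inr ⟨hjb, hj, fun ⟨_, hlt⟩ => by omega⟩
  · have : j ∈ τ i → mex (τ i) < j := fun hj =>
      lt_of_le_of_ne (by omega) fun h => mex_notMem _ (h ▸ hj)
    constructor
    · rintro (⟨hj, -⟩ | ⟨h, -⟩)
      · exact ⟨hj, Or.inr (this hj)⟩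
      · omega
    · rintro ⟨hj, -⟩
      exact Or.inl ⟨hj, by omega⟩

end facet

theorem stmt12_general (m d : ℕ) (n a : ℕ → ℕ)
    (ha : ∀ i, i < m → 0 < a i ∧ a i ≤ n i) :
    ∀ τ : ℕ → Finset ℕ, IsFacetT m d n a τ →
      ((∑ i ∈ Finset.range (m + 1), Multiset.card (PhiMapT m a n τ i))
        = ∑ i ∈ Finset.range m, (upT a n τ i ∪ tailT m a n τ i).card) ∧
      (∀ i, i < m →
        upT a n τ i ∪ tailT m a n τ i
          = rhoMap (a i) (PhiMapT m a n τ (i + 1)) ∪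
            Finset.image (fun j => j - offF (bfun a n τ) i)
              (rhoMap ((∑ t ∈ Finset.range m, bfun a n τ t) -
                    ((∑ t ∈ Finset.range m, a t) - d)) (PhiMapT m a n τ 0) ∩
                Finset.Ico (offF (bfun a n τ) i) (offF (bfun a n τ) i + bfun a n τ i))) := by
  rintro τ ⟨hτn, hτa, -, hsum⟩
  have han : ∀ i < m, a i ≤ n i := fun i hi => (ha i hi).2
  set b := bfun a n τ
  set T := rhoMap ((∑ t ∈ range m, b t) - ((∑ t ∈ range m, a t) - d)) (PhiMapT m a n τ 0)
  have hT : T = globF m b τ \ range (mex (globF m b τ)) :=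
    rhoMap_phiMapT_zero hτn hτa han hsum
  have hΦ : ∀ i < m, rhoMap (a i) (PhiMapT m a n τ (i + 1)) = τ i \ range (b i) := by
    intro i hi
    simpa [PhiMapT, Nat.succ_le_of_lt hi] using rhoMap_phiBlock (hτn i hi) (hτa i hi) (han i hi)
  have hblock : ∀ i < m, upT a n τ i ∪ tailT m a n τ i
      = rhoMap (a i) (PhiMapT m a n τ (i + 1)) ∪
        (T ∩ Ico (offF b i) (offF b i + b i)).image (· - offF b i) := by
    intro i hi
    rw [upT_union_tailT hi hτa (hτn i hi), hΦ i hi, hT,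
      ← rhoMap_union_image_eq_restrictionBlock hτn hτa han hi, rhoMap_phiBlock (hτn i hi)
      (hτa i hi) (han i hi)]
  refine ⟨?_, hblock⟩
  have hTsub : T ⊆ range (offF b m) := hT ▸ sdiff_subset.trans globF_subset_range
  rw [Finset.sum_range_succ', ← card_rhoMap ((∑ t ∈ range m, b t) - ((∑ t ∈ range m, a t) - d)),
    ← sum_card_image_sub_inter_Ico hTsub, ← Finset.sum_add_distrib]
  refine Finset.sum_congr rfl fun i hi => ?_
  have hi := mem_range.mp hi
  rw [hblock i hi, Finset.card_union_of_disjoint, card_rhoMap]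
  rw [hΦ i hi]
  exact disjoint_sdiff_range_image_sub_inter_Ico _ _ _ _

/-- For every facet `τ` of `Λ_d`, `deg Φ(τ) = |R(τ)|` where `R(τ) = up(τ) ∪ tail(τ)`;
more precisely, blockwise,
`R(τ) = ρ(X₀,V[μ])(μ_{X₀}) ∪ ⋃ᵢ ρ(X_i,V_i)(μ_{X_i})` with `μ = Φ(τ)`. -/
theorem stmt12 (m d : ℕ) (n a : ℕ → ℕ)
    (hd1 : 1 ≤ d) (hd2 : d ≤ ∑ i ∈ Finset.range m, a i)
    (ha : ∀ i, i < m → 0 < a i ∧ a i ≤ n i) :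
    ∀ τ : ℕ → Finset ℕ, IsFacetT m d n a τ →
      ((∑ i ∈ Finset.range (m + 1), Multiset.card (PhiMapT m a n τ i))
        = ∑ i ∈ Finset.range m, (upT a n τ i ∪ tailT m a n τ i).card) ∧
      (∀ i, i < m →
        upT a n τ i ∪ tailT m a n τ i
          = rhoMap (a i) (PhiMapT m a n τ (i + 1)) ∪
            Finset.image (fun j => j - offF (bfun a n τ) i)
              (rhoMap ((∑ t ∈ Finset.range m, bfun a n τ t) -
                    ((∑ t ∈ Finset.range m, a t) - d)) (PhiMapT m a n τ 0) ∩
                Finset.Ico (offF (bfun a n τ) i) (offF (bfun a n τ) i + bfun a n τ i))) :=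
  stmt12_general m d n a ha
end
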